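/- arXiv:2206.14726 — 9 statements merged into one kernel-verified Lean document; each statement's English description precedes it below -/
import Mathlib

section
/- If {A_n} (n = 1, 2, 3, ...) is any infinite sequence of Lebesgue measurable subsets of ℝ, each of positive Lebesgue measure, then there exists a sequence {a_n} of pairwise distinct points such that a_n ∈ A_n for every n and all the mutual distances |a_m - a_n| (m ≠ n) are rational numbers. -/
open MeasureTheory Metric Filter Topology Set


lemma exists_density_point (S : Set ℝ) (hS : 0 < volume S) :
    ∃ y : ℝ, ∃ r0 > (0:ℝ), ∀ r, 0 < r → r ≤ r0 →
      (7/8 : ENNReal) * volume (closedBall y r) ≤ volume (S ∩ closedBall y r) := by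
  have h := Besicovitch.ae_tendsto_measure_inter_div (volume : Measure ℝ) S
  have hne : (volume.restrict S) ≠ 0 := fun h0 => hS.ne'
    (by simpa [Measure.restrict_apply_univ] using congrArg (fun μ : Measure ℝ => μ Set.univ) h0)
  have : NeBot (ae (volume.restrict S)) := ae_neBot.2 hne
  obtain ⟨y, hy⟩ := h.exists
  have hev : ∀ᶠ r in 𝓝[>] (0:ℝ),
      (7/8 : ENNReal) < volume (S ∩ closedBall y r) / volume (closedBall y r) :=
    hy.eventually (eventually_gt_nhds (by rw [ENNReal.div_lt_iff (by norm_num) (by norm_num)]; norm_num))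
  obtain ⟨r0, hr0, hsub⟩ := mem_nhdsGT_iff_exists_Ioc_subset.1 hev
  refine ⟨y, r0, hr0, fun r hr hrle => ?_⟩
  have hlt := hsub ⟨hr, hrle⟩
  have hball : volume (closedBall y r) = ENNReal.ofReal (2 * r) := by
    rw [Real.volume_closedBall]
  have hb0 : volume (closedBall y r) ≠ 0 := by
    rw [hball]; simp [ENNReal.ofReal_pos]; linarith
  have hbt : volume (closedBall y r) ≠ ⊤ := by rw [hball]; exact ENNReal.ofReal_ne_top
  exact le_of_lt ((ENNReal.lt_div_iff_mul_lt (Or.inl hb0) (Or.inl hbt)).1 hlt)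


lemma conull_translates (A : Set ℝ) (hA : MeasurableSet A) (hpos : 0 < volume A)
    (D : Set ℝ) (hc : D.Countable) (hd : Dense D) :
    volume (⋃ d ∈ D, (fun x => x - d) ⁻¹' A)ᶜ = 0 := by
  set U := ⋃ d ∈ D, (fun x => x - d) ⁻¹' A with hU
  have hUm : MeasurableSet U :=
    MeasurableSet.biUnion hc (fun d _ => hA.preimage (measurable_id.sub_const d))
  by_contra h0
  have hNpos : 0 < volume Uᶜ := pos_iff_ne_zero.2 h0
  obtain ⟨y, ry, hry, hy⟩ := exists_density_point Uᶜ hNpos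
  obtain ⟨z, rz, hrz, hz⟩ := exists_density_point A hpos
  set r := min (ry / 2) rz with hr
  have hrpos : 0 < r := lt_min (by linarith) hrz
  have hr2 : 2 * r ≤ ry := by
    have := min_le_left (ry/2) rz; simp only [hr] at *; linarith [this]
  have hrz' : r ≤ rz := min_le_right _ _
  -- pick d in D close to y - z
  obtain ⟨d, hdball, hdD⟩ : (ball (y - z) r ∩ D).Nonempty := by
    have := hd (y - z)
    exact (_root_.mem_closure_iff.1 this) (ball (y - z) r) isOpen_ball (mem_ball_self hrpos)
  -- translate inclusion
  have hincl : (fun x => x - d) ⁻¹' (A ∩ closedBall z r) ⊆ U ∩ closedBall y (2 * r) := by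
    rintro x ⟨hxA, hxball⟩
    constructor
    · exact mem_biUnion hdD hxA
    · have h1 : dist (x - d) z ≤ r := hxball
      have h2 : dist d (y - z) < r := hdball
      rw [Real.dist_eq] at h1 h2
      have h3 : |x - y| ≤ |x - d - z| + |d - (y - z)| := by
        have he : x - y = (x - d - z) + (d - (y - z)) := by ring
        rw [he]; exact abs_add_le _ _
      have : dist x y ≤ 2 * r := by rw [Real.dist_eq]; linarith
      exact mem_closedBall.2 this
  have htrans : volume ((fun x => x - d) ⁻¹' (A ∩ closedBall z r)) = volume (A ∩ closedBall z r) := by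
    have : (fun x : ℝ => x - d) = (fun x : ℝ => x + (-d)) := by funext x; ring
    rw [this, measure_preimage_add_right]
  -- lower bounds
  have hb1 : (7/8 : ENNReal) * volume (closedBall z r) ≤ volume (U ∩ closedBall y (2*r)) := by
    calc (7/8 : ENNReal) * volume (closedBall z r) ≤ volume (A ∩ closedBall z r) :=
          hz r hrpos hrz'
      _ = volume ((fun x => x - d) ⁻¹' (A ∩ closedBall z r)) := htrans.symm
      _ ≤ volume (U ∩ closedBall y (2*r)) := measure_mono hincl
  have hb2 : (7/8 : ENNReal) * volume (closedBall y (2*r)) ≤ volume (Uᶜ ∩ closedBall y (2*r)) :=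
    hy (2*r) (by linarith) hr2
  have hsplit : volume (U ∩ closedBall y (2*r)) + volume (Uᶜ ∩ closedBall y (2*r))
      = volume (closedBall y (2*r)) := by
    rw [inter_comm U _, inter_comm Uᶜ _, ← Set.diff_eq]
    exact measure_inter_add_diff _ hUm
  -- numeric contradiction
  have hcb1 : volume (closedBall z r) = ENNReal.ofReal (2*r) := by rw [Real.volume_closedBall]
  have hcb2 : volume (closedBall y (2*r)) = ENNReal.ofReal (4*r) := by
    rw [Real.volume_closedBall]; ring_nf
  have : volume (closedBall y (2*r)) < volume (U ∩ closedBall y (2*r)) + volume (Uᶜ ∩ closedBall y (2*r)) := by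
    calc volume (closedBall y (2*r)) = ENNReal.ofReal (4*r) := hcb2
      _ < ENNReal.ofReal (21/4*r) := by
          rw [ENNReal.ofReal_lt_ofReal_iff (by linarith)]; linarith
      _ = (7/8) * ENNReal.ofReal (2*r) + (7/8) * ENNReal.ofReal (4*r) := by
          rw [show (7/8 : ENNReal) = ENNReal.ofReal (7/8) by
              rw [ENNReal.ofReal_div_of_pos] <;> norm_num]
          rw [← ENNReal.ofReal_mul (by norm_num), ← ENNReal.ofReal_mul (by norm_num),
            ← ENNReal.ofReal_add (by linarith) (by linarith)]
          ring_nf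
      _ ≤ volume (U ∩ closedBall y (2*r)) + volume (Uᶜ ∩ closedBall y (2*r)) := by
          rw [← hcb1, ← hcb2]; exact add_le_add hb1 hb2
  rw [hsplit] at this
  exact lt_irrefl _ this

lemma dense_rat_compl (F : Finset ℚ) : Dense {x : ℝ | ∃ q : ℚ, q ∉ F ∧ (q:ℝ) = x} := by
  rw [Metric.dense_iff]
  intro x r hr
  obtain ⟨q1, hq1a, hq1b⟩ := exists_rat_btwn (show x - r < x by linarith)
  obtain ⟨q2, hq2a, hq2b⟩ := exists_rat_btwn (show x < x + r by linarith)
  have hq12 : q1 < q2 := by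
    rw [← Rat.cast_lt (K := ℝ)]; linarith
  obtain ⟨q, hqIoo, hqF⟩ := (Set.infinite_coe_iff.mp (Set.Ioo.infinite hq12)).exists_notMem_finset F
  refine ⟨(q:ℝ), ?_, q, hqF, rfl⟩
  obtain ⟨h1, h2⟩ := hqIoo
  rw [← Rat.cast_lt (K := ℝ)] at h1 h2
  rw [mem_ball, Real.dist_eq, abs_lt]
  constructor <;> linarith

lemma countable_rat_compl (F : Finset ℚ) :
    {x : ℝ | ∃ q : ℚ, q ∉ F ∧ (q:ℝ) = x}.Countable := by
  have : {x : ℝ | ∃ q : ℚ, q ∉ F ∧ (q:ℝ) = x} = (fun q : ℚ => (q:ℝ)) '' {q | q ∉ F} := by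
    ext x; simp [Set.mem_image]
  rw [this]
  exact (Set.to_countable _).image _

/-- Steinhaus: given a sequence of measurable sets of positive measure, one can pick
pairwise distinct points, one in each set, with all mutual distances rational. -/
theorem steinhaus_rational_distances_measure (A : ℕ → Set ℝ)
    (hmeas : ∀ n, MeasurableSet (A n))
    (hpos : ∀ n, 0 < MeasureTheory.volume (A n)) :
    ∃ a : ℕ → ℝ, Function.Injective a ∧ (∀ n, a n ∈ A n) ∧
      ∀ m n, m ≠ n → ∃ q : ℚ, |a m - a n| = (q : ℝ) := by
  classical
  set D : Finset ℚ → Set ℝ := fun F => {x : ℝ | ∃ q : ℚ, q ∉ F ∧ (q:ℝ) = x} with hD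
  set U : ℕ → Finset ℚ → Set ℝ := fun n F => ⋃ d ∈ D F, (fun x => x - d) ⁻¹' (A n) with hUdef
  have hconull : ∀ n F, volume (U n F)ᶜ = 0 := fun n F =>
    conull_translates (A n) (hmeas n) (hpos n) (D F) (countable_rat_compl F) (dense_rat_compl F)
  have hInt : (⋂ n, ⋂ F : Finset ℚ, U n F).Nonempty := by
    by_contra h
    rw [Set.not_nonempty_iff_eq_empty] at h
    have huniv : (volume : Measure ℝ) Set.univ = 0 := by
      have h1 : (Set.univ : Set ℝ) = (⋂ n, ⋂ F : Finset ℚ, U n F)ᶜ := by rw [h]; simp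
      rw [h1, Set.compl_iInter]
      refine measure_iUnion_null fun n => ?_
      rw [Set.compl_iInter]
      exact measure_iUnion_null fun F => hconull n F
    rw [Real.volume_univ] at huniv
    exact ENNReal.top_ne_zero huniv
  obtain ⟨x, hx⟩ := hInt
  simp only [Set.mem_iInter] at hx
  have hQ : ∀ n, {q : ℚ | x - (q:ℝ) ∈ A n}.Infinite := by
    intro n
    by_contra hfin
    rw [Set.not_infinite] at hfin
    have := hx n hfin.toFinset
    simp only [hUdef, Set.mem_iUnion, Set.mem_preimage] at this
    obtain ⟨d, hdD, hdA⟩ := this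
    obtain ⟨q, hqF, hqd⟩ := hdD
    subst hqd
    exact hqF (hfin.mem_toFinset.2 hdA)
  have hpick : ∀ (n : ℕ) (s : Finset ℚ), ∃ q : ℚ, (x - (q:ℝ) ∈ A n) ∧ q ∉ s := by
    intro n s
    obtain ⟨q, hq1, hq2⟩ := (hQ n).exists_notMem_finset s
    exact ⟨q, hq1, hq2⟩
  choose c hc1 hc2 using hpick
  set g : ℕ → ℚ × Finset ℚ := fun n =>
    Nat.rec (⟨c 0 ∅, {c 0 ∅}⟩ : ℚ × Finset ℚ)
      (fun n p => ⟨c (n+1) p.2, insert (c (n+1) p.2) p.2⟩) n with hg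
  have hgsucc : ∀ n, g (n+1) = ⟨c (n+1) (g n).2, insert (c (n+1) (g n).2) (g n).2⟩ :=
    fun n => rfl
  have hmem : ∀ n, x - ((g n).1 : ℝ) ∈ A n := by
    intro n
    cases n with
    | zero => exact hc1 0 ∅
    | succ k => exact hc1 (k+1) (g k).2
  have hin : ∀ n, (g n).1 ∈ (g n).2 := by
    intro n
    cases n with
    | zero => exact Finset.mem_singleton_self _
    | succ k => exact Finset.mem_insert_self _ _
  have hmono : ∀ m n, m ≤ n → (g m).2 ⊆ (g n).2 := by
    intro m n hmn
    induction n with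
    | zero => rw [Nat.le_zero.1 hmn]
    | succ k ih =>
      rcases Nat.lt_or_ge m (k+1) with hlt | hge
      · exact (ih (Nat.lt_succ_iff.1 hlt)).trans (by rw [hgsucc]; exact Finset.subset_insert _ _)
      · rw [Nat.le_antisymm hmn hge]
  have hnotin : ∀ n, (g (n+1)).1 ∉ (g n).2 := fun n => hc2 (n+1) (g n).2
  have hqinj : Function.Injective (fun n => (g n).1) := by
    have key : ∀ m n, m < n → (g m).1 ≠ (g n).1 := by
      intro m n hmn heq
      obtain ⟨k, rfl⟩ := Nat.exists_eq_add_of_lt hmn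
      have hmk : m ≤ m + k := Nat.le_add_right m k
      have : (g m).1 ∈ (g (m+k)).2 := hmono m (m+k) hmk (hin m)
      rw [heq] at this
      exact hnotin (m+k) (by simpa [Nat.add_assoc] using this)
    intro m n heq
    rcases lt_trichotomy m n with h | h | h
    · exact absurd heq (key m n h)
    · exact h
    · exact absurd heq.symm (key n m h)
  refine ⟨fun n => x - ((g n).1 : ℝ), ?_, hmem, ?_⟩
  · intro m n heq
    have h1 : ((g m).1 : ℝ) = ((g n).1 : ℝ) := by
      have h2 : x - ((g m).1:ℝ) = x - ((g n).1:ℝ) := heq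
      linarith
    exact hqinj (Rat.cast_injective h1)
  · intro m n _
    refine ⟨|(g n).1 - (g m).1|, ?_⟩
    push_cast
    congr 1
    ring
end

section
/- If E is an infinite Lebesgue measurable subset of ℝ, then there exist a countable set P ⊆ E whose points have pairwise rational mutual distances and a Lebesgue null set Z ⊆ ℝ such that P ⊆ E ⊆ P′ ∪ Z, where P′ denotes the derived set of P (the set of all accumulation points of P). -/
open MeasureTheory Metric Filter Set ENNReal

lemma exists_density_pt (N : Set ℝ) (h0 : volume N ≠ 0) :
    ∃ x, Tendsto (fun r => volume (N ∩ closedBall x r) / volume (closedBall x r))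
      (nhdsWithin 0 (Set.Ioi 0)) (nhds 1) := by
  by_contra h
  push_neg at h
  have hae := Besicovitch.ae_tendsto_measure_inter_div volume N
  rw [ae_iff] at hae
  have : {x : ℝ | ¬ Tendsto (fun r => volume (N ∩ closedBall x r) / volume (closedBall x r))
      (nhdsWithin 0 (Set.Ioi 0)) (nhds 1)} = Set.univ := by
    ext x; simp only [Set.mem_setOf_eq, Set.mem_univ, iff_true]; exact h x
  rw [this, Measure.restrict_apply_univ] at hae
  exact h0 hae

lemma rat_invariant_conull (N : Set ℝ) (hN : MeasurableSet N)
    (hinv : ∀ (q : ℚ) (a : ℝ), a ∈ N ↔ a + (q : ℝ) ∈ N) (h0 : volume N ≠ 0) :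
    volume Nᶜ = 0 := by
  by_contra hc
  obtain ⟨x₀, hx₀⟩ := exists_density_pt N h0
  obtain ⟨x₁, hx₁⟩ := exists_density_pt Nᶜ hc
  have h34 : (ENNReal.ofReal (3/4)) < 1 := by
    rw [show (1:ℝ≥0∞) = ENNReal.ofReal 1 by simp]
    exact ENNReal.ofReal_lt_ofReal_iff_of_nonneg (by norm_num) |>.mpr (by norm_num)
  have e1 := hx₀.eventually_const_lt h34
  have e2 := hx₁.eventually_const_lt h34
  obtain ⟨r, ⟨hd1, hd2⟩, hr⟩ := ((e1.and e2).and eventually_mem_nhdsWithin).exists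
  rw [Set.mem_Ioi] at hr
  have hcb : ∀ x : ℝ, volume (closedBall x r) = ENNReal.ofReal (2*r) :=
    fun x => Real.volume_closedBall x r
  have hne : ENNReal.ofReal (2*r) ≠ 0 := (ENNReal.ofReal_pos.mpr (by linarith)).ne'
  -- quantitative bounds
  have a1 : ENNReal.ofReal (3/2 * r) < volume (N ∩ closedBall x₀ r) := by
    rw [hcb x₀] at hd1
    have := (ENNReal.lt_div_iff_mul_lt (Or.inl hne) (Or.inl ENNReal.ofReal_ne_top)).mp hd1
    rwa [← ENNReal.ofReal_mul (by norm_num), show (3/4 : ℝ) * (2*r) = 3/2 * r by ring] at this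
  have a2 : ENNReal.ofReal (3/2 * r) < volume (Nᶜ ∩ closedBall x₁ r) := by
    rw [hcb x₁] at hd2
    have := (ENNReal.lt_div_iff_mul_lt (Or.inl hne) (Or.inl ENNReal.ofReal_ne_top)).mp hd2
    rwa [← ENNReal.ofReal_mul (by norm_num), show (3/4 : ℝ) * (2*r) = 3/2 * r by ring] at this
  -- pick rational close to x₁ - x₀
  obtain ⟨q, hq1, hq2⟩ := exists_rat_btwn (show x₁ - x₀ - r/4 < x₁ - x₀ + r/4 by linarith)
  set c : ℝ := x₀ + q with hc_def
  -- translation invariance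
  have htrans : volume (N ∩ closedBall c r) = volume (N ∩ closedBall x₀ r) := by
    have hset : N ∩ closedBall c r = (fun a : ℝ => a - (q:ℝ)) ⁻¹' (N ∩ closedBall x₀ r) := by
      ext a
      simp only [Set.mem_inter_iff, Set.mem_preimage, mem_closedBall, Real.dist_eq]
      have hNa : a ∈ N ↔ a - (q:ℝ) ∈ N := by
        have := hinv q (a - q)
        rw [sub_add_cancel] at this
        exact this.symm
      have hd : a - c = (a - q) - x₀ := by rw [hc_def]; ring
      rw [hNa, hd]
    rw [hset, show (fun a : ℝ => a - (q:ℝ)) = (fun a : ℝ => a + (-(q:ℝ))) from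
      funext fun a => by ring]
    exact measure_preimage_add_right volume _ _
  -- small ball inside translated ball
  have hsub : closedBall x₁ (r/2) ⊆ closedBall c r := by
    apply closedBall_subset_closedBall'
    have : dist x₁ c < r/4 := by
      rw [Real.dist_eq, hc_def, abs_lt]; constructor <;> linarith
    linarith
  -- lower bound on complement in small ball
  have hb2 : ENNReal.ofReal (r/2) < volume (Nᶜ ∩ closedBall x₁ (r/2)) := by
    by_contra hb
    push_neg at hb
    have hdiff : volume (closedBall x₁ r \ closedBall x₁ (r/2)) = ENNReal.ofReal r := by
      rw [measure_diff (closedBall_subset_closedBall (by linarith))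
        measurableSet_closedBall.nullMeasurableSet measure_closedBall_lt_top.ne,
        hcb x₁, Real.volume_closedBall, ← ENNReal.ofReal_sub _ (by linarith)]
      congr 1; ring
    have hcover : Nᶜ ∩ closedBall x₁ r ⊆
        (Nᶜ ∩ closedBall x₁ (r/2)) ∪ (closedBall x₁ r \ closedBall x₁ (r/2)) := by
      intro y ⟨hy1, hy2⟩
      by_cases hy3 : y ∈ closedBall x₁ (r/2)
      · exact Or.inl ⟨hy1, hy3⟩
      · exact Or.inr ⟨hy2, hy3⟩
    have := (measure_mono hcover).trans (measure_union_le (μ := volume) _ _)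
    have h2 := a2.trans_le (this.trans (add_le_add hb hdiff.le))
    rw [← ENNReal.ofReal_add (by linarith) (by linarith)] at h2
    have := ENNReal.ofReal_lt_ofReal_iff_of_nonneg (by linarith) |>.mp h2
    linarith
  -- combine
  have hsum : volume (N ∩ closedBall c r) + volume (Nᶜ ∩ closedBall c r)
      = ENNReal.ofReal (2*r) := by
    rw [← hcb c, Set.inter_comm N, show Nᶜ ∩ closedBall c r = closedBall c r \ N by
      rw [Set.diff_eq, Set.inter_comm]]
    exact measure_inter_add_diff _ hN
  have hlow2 : ENNReal.ofReal (r/2) < volume (Nᶜ ∩ closedBall c r) :=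
    hb2.trans_le (measure_mono (Set.inter_subset_inter_right _ hsub))
  have final : ENNReal.ofReal (3/2*r) + ENNReal.ofReal (r/2)
      < volume (N ∩ closedBall c r) + volume (Nᶜ ∩ closedBall c r) :=
    ENNReal.add_lt_add (by rw [htrans]; exact a1) hlow2
  rw [hsum, ← ENNReal.ofReal_add (by linarith) (by linarith)] at final
  have := ENNReal.ofReal_lt_ofReal_iff_of_nonneg (by linarith) |>.mp final
  linarith
open MeasureTheory Metric Filter Set ENNReal

lemma translates_conull (S : Set ℝ) (hS : MeasurableSet S) (h0 : volume S ≠ 0) :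
    volume {a : ℝ | ∃ q : ℚ, a + (q : ℝ) ∈ S}ᶜ = 0 := by
  apply rat_invariant_conull
  · have : {a : ℝ | ∃ q : ℚ, a + (q : ℝ) ∈ S} = ⋃ q : ℚ, (fun a : ℝ => a + (q : ℝ)) ⁻¹' S := by
      ext a; simp [Set.mem_iUnion]
    rw [this]
    exact MeasurableSet.iUnion fun q => hS.preimage (measurable_add_const _)
  · intro q a
    constructor
    · rintro ⟨q₀, h⟩
      refine ⟨q₀ - q, ?_⟩
      rw [show a + (q:ℝ) + ((q₀ - q : ℚ) : ℝ) = a + (q₀ : ℝ) by push_cast; ring]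
      exact h
    · rintro ⟨q₀, h⟩
      refine ⟨q + q₀, ?_⟩
      rw [show a + ((q + q₀ : ℚ) : ℝ) = a + (q:ℝ) + (q₀ : ℝ) by push_cast; ring]
      exact h
  · intro h
    apply h0
    apply measure_mono_null _ h
    intro a ha
    exact ⟨0, by simpa using ha⟩

/-- Steinhaus: an infinite measurable set `E` contains a countable set `P` with pairwise
rational mutual distances such that `E ⊆ P′ ∪ Z` for some Lebesgue null set `Z`, where
`P′ = derivedSet P` is the set of accumulation points of `P`. -/
theorem steinhaus_covering_measure (E : Set ℝ)
    (hE : MeasurableSet E) (hinf : E.Infinite) :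
    ∃ P Z : Set ℝ, P.Countable ∧ P ⊆ E ∧
      (∀ p ∈ P, ∀ q ∈ P, ∃ r : ℚ, |p - q| = (r : ℝ)) ∧
      MeasureTheory.volume Z = 0 ∧ E ⊆ derivedSet P ∪ Z := by
  classical
  by_cases h0 : volume E = 0
  · exact ⟨∅, E, countable_empty, empty_subset _, by simp, h0, fun x hx => Or.inr hx⟩
  set Bad : Set ℝ := ⋃ p : ℚ × ℚ, if volume (E ∩ Set.Ioo ((p.1:ℝ)) ((p.2:ℝ))) = 0 then ∅
      else {a : ℝ | ∃ q : ℚ, a + (q:ℝ) ∈ E ∩ Set.Ioo ((p.1:ℝ)) ((p.2:ℝ))}ᶜ with hBad_def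
  have hBad : volume Bad = 0 := by
    apply measure_iUnion_null
    intro p
    by_cases hp : volume (E ∩ Set.Ioo ((p.1:ℝ)) ((p.2:ℝ))) = 0
    · simp [hp]
    · rw [if_neg hp]
      exact translates_conull _ (hE.inter measurableSet_Ioo) hp
  obtain ⟨a, ha⟩ : ∃ a : ℝ, a ∉ Bad := by
    by_contra h
    push_neg at h
    rw [Set.eq_univ_of_forall h] at hBad
    simp [Real.volume_univ] at hBad
  have key : ∀ u v : ℚ, volume (E ∩ Set.Ioo ((u:ℝ)) ((v:ℝ))) ≠ 0 →
      ∃ q : ℚ, a + (q:ℝ) ∈ E ∩ Set.Ioo ((u:ℝ)) ((v:ℝ)) := by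
    intro u v huv
    by_contra hq
    apply ha
    refine Set.mem_iUnion.mpr ⟨(u, v), ?_⟩
    rw [if_neg huv]
    exact hq
  refine ⟨E ∩ Set.range (fun q : ℚ => a + (q:ℝ)),
    E \ {x | Tendsto (fun r => volume (E ∩ closedBall x r) / volume (closedBall x r))
      (nhdsWithin 0 (Set.Ioi 0)) (nhds 1)},
    Set.Countable.mono Set.inter_subset_right (Set.countable_range _),
    Set.inter_subset_left, ?_, ?_, ?_⟩
  · rintro p ⟨hpE, q₁, rfl⟩ p' ⟨hp'E, q₂, rfl⟩
    exact ⟨|q₁ - q₂|, by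
      rw [show a + (q₁:ℝ) - (a + (q₂:ℝ)) = ((q₁ - q₂ : ℚ) : ℝ) by push_cast; ring, ← Rat.cast_abs]⟩
  · have hae := Besicovitch.ae_tendsto_measure_inter_div volume E
    rw [ae_iff] at hae
    rw [Measure.restrict_apply' hE] at hae
    apply measure_mono_null _ hae
    intro x ⟨hx1, hx2⟩
    exact ⟨hx2, hx1⟩
  · intro x hx
    by_cases hxT : Tendsto (fun r => volume (E ∩ closedBall x r) / volume (closedBall x r))
      (nhdsWithin 0 (Set.Ioi 0)) (nhds 1)
    · left
      rw [mem_derivedSet, accPt_iff_nhds]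
      intro U hU
      obtain ⟨ε, hε, hball⟩ := Metric.mem_nhds_iff.mp hU
      have h34 : (ENNReal.ofReal (3/4)) < 1 := by
        rw [show (1:ℝ≥0∞) = ENNReal.ofReal 1 by simp]
        exact ENNReal.ofReal_lt_ofReal_iff_of_nonneg (by norm_num) |>.mpr (by norm_num)
      have e1 := hxT.eventually_const_lt h34
      have e2 : ∀ᶠ r in nhdsWithin (0:ℝ) (Set.Ioi 0), r ∈ Set.Ioo (0:ℝ) ε :=
        eventually_mem_set.mpr (Ioo_mem_nhdsGT_of_mem ⟨le_refl 0, hε⟩)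
      obtain ⟨r, hd1, hr0, hrε⟩ := (e1.and e2).exists
      -- annulus has positive measure
      have hT : volume ((E ∩ closedBall x r) \ closedBall x (r/4)) ≠ 0 := by
        intro hT0
        have hle : volume (E ∩ closedBall x r) ≤ ENNReal.ofReal (r/2) := by
          have hsub : E ∩ closedBall x r ⊆
              ((E ∩ closedBall x r) \ closedBall x (r/4)) ∪ closedBall x (r/4) := by
            intro y hy
            by_cases hy4 : y ∈ closedBall x (r/4)
            · exact Or.inr hy4
            · exact Or.inl ⟨hy, hy4⟩
          calc volume (E ∩ closedBall x r)
              ≤ volume (((E ∩ closedBall x r) \ closedBall x (r/4)) ∪ closedBall x (r/4)) :=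
                measure_mono hsub
            _ ≤ volume ((E ∩ closedBall x r) \ closedBall x (r/4)) + volume (closedBall x (r/4)) :=
                measure_union_le _ _
            _ = ENNReal.ofReal (r/2) := by
                rw [hT0, zero_add, Real.volume_closedBall]; congr 1; ring
        have hratio : volume (E ∩ closedBall x r) / volume (closedBall x r)
            ≤ ENNReal.ofReal (1/4) := by
          rw [Real.volume_closedBall]
          apply ENNReal.div_le_of_le_mul
          rw [← ENNReal.ofReal_mul (by norm_num)]
          exact hle.trans_eq (by congr 1; ring)
        have := hd1.trans_le hratio
        have := ENNReal.ofReal_lt_ofReal_iff_of_nonneg (by norm_num) |>.mp this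
        linarith
      -- cover the annulus by rational intervals avoiding x inside ball x ε
      have hcover : (E ∩ closedBall x r) \ closedBall x (r/4) ⊆
          ⋃ (p : ℚ × ℚ) (_ : Set.Ioo ((p.1:ℝ)) ((p.2:ℝ)) ⊆ ball x ε \ {x}),
            (E ∩ Set.Ioo ((p.1:ℝ)) ((p.2:ℝ))) := by
        rintro y ⟨⟨hyE, hyr⟩, hyr4⟩
        rw [mem_closedBall, Real.dist_eq] at hyr hyr4
        push_neg at hyr4
        have hyx : y ≠ x := by
          intro h; rw [h] at hyr4; simp at hyr4; linarith
        rcases hyx.lt_or_gt with h | h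
        · -- y < x
          obtain ⟨v, hv1, hv2⟩ := exists_rat_btwn h
          obtain ⟨u, hu1, hu2⟩ := exists_rat_btwn (show x - ε < y by
            have : x - y ≤ |y - x| := by rw [abs_sub_comm]; exact le_abs_self _
            linarith)
          refine Set.mem_iUnion.mpr ⟨(u, v), Set.mem_iUnion.mpr ⟨?_, hyE, hu2, hv1⟩⟩
          rintro z ⟨hz1, hz2⟩
          constructor
          · rw [mem_ball, Real.dist_eq, abs_lt]
            constructor <;> linarith
          · simp only [Set.mem_singleton_iff]
            intro hzx; rw [hzx] at hz2; linarith
        · -- y > x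
          obtain ⟨u, hu1, hu2⟩ := exists_rat_btwn h
          obtain ⟨v, hv1, hv2⟩ := exists_rat_btwn (show y < x + ε by
            have : y - x ≤ |y - x| := le_abs_self _
            linarith)
          refine Set.mem_iUnion.mpr ⟨(u, v), Set.mem_iUnion.mpr ⟨?_, hyE, hu2, hv1⟩⟩
          rintro z ⟨hz1, hz2⟩
          constructor
          · rw [mem_ball, Real.dist_eq, abs_lt]
            constructor <;> linarith
          · simp only [Set.mem_singleton_iff]
            intro hzx; rw [hzx] at hz1; linarith
      have hexists : ∃ p : ℚ × ℚ, Set.Ioo ((p.1:ℝ)) ((p.2:ℝ)) ⊆ ball x ε \ {x} ∧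
          volume (E ∩ Set.Ioo ((p.1:ℝ)) ((p.2:ℝ))) ≠ 0 := by
        by_contra h
        push_neg at h
        exact hT (measure_mono_null hcover
          (measure_iUnion_null fun p => measure_iUnion_null fun hp => h p hp))
      obtain ⟨⟨u, v⟩, hsub', hpos⟩ := hexists
      obtain ⟨q, hq⟩ := key u v hpos
      have hmem := hsub' hq.2
      refine ⟨a + (q:ℝ), ⟨hball hmem.1, hq.1, ⟨q, rfl⟩⟩, ?_⟩
      intro hEq
      exact hmem.2 (by simp [hEq])
    · exact Or.inr ⟨hx, hxT⟩
end

section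
/- (Picard) If A and B are subsets of ℝ that are nonmeager (of second category) and have the Baire property, then the distance set D(A,B) = {|a - b| : a ∈ A, b ∈ B} contains a nonempty open interval. -/
/-- `A` has the Baire property: it differs from an open set by a meager set. -/
def HasBaireProp (A : Set ℝ) : Prop :=
  ∃ U : Set ℝ, IsOpen U ∧ IsMeagre (symmDiff A U)

lemma isMeagre_union {s t : Set ℝ} (hs : IsMeagre s) (ht : IsMeagre t) :
    IsMeagre (s ∪ t) := by
  rw [IsMeagre, Set.compl_union]
  exact Filter.inter_mem hs ht

/-- From nonmeager + Baire property, extract an interval on which the set is comeager. -/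
lemma exists_interval (A : Set ℝ) (hA : HasBaireProp A) (hA0 : ¬ IsMeagre A) :
    ∃ a ε : ℝ, 0 < ε ∧ ∃ M : Set ℝ, IsMeagre M ∧ Set.Ioo (a - ε) (a + ε) \ M ⊆ A := by
  obtain ⟨U, hU, hM⟩ := hA
  have hUne : U.Nonempty := by
    rcases Set.eq_empty_or_nonempty U with h | h
    · exfalso
      apply hA0
      subst h
      have he : symmDiff A ∅ = A := by simp
      rwa [he] at hM
    · exact h
  obtain ⟨a, ha⟩ := hUne
  obtain ⟨ε, hε, hball⟩ := Metric.isOpen_iff.1 hU a ha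
  refine ⟨a, ε, hε, symmDiff A U, hM, ?_⟩
  rintro x ⟨hx1, hx2⟩
  have hxU : x ∈ U := by
    apply hball
    rw [Metric.mem_ball, Real.dist_eq, abs_lt]
    exact ⟨by linarith [hx1.1], by linarith [hx1.2]⟩
  by_contra hxA
  exact hx2 (Or.inr ⟨hxU, hxA⟩)

/-- Key step: every `d` close to `a - b` is realized as a difference. -/
lemma key (A B : Set ℝ) (a b ε : ℝ) (hε : 0 < ε)
    (MA MB : Set ℝ) (hMA : IsMeagre MA) (hMB : IsMeagre MB)
    (hA : Set.Ioo (a - ε) (a + ε) \ MA ⊆ A)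
    (hB : Set.Ioo (b - ε) (b + ε) \ MB ⊆ B)
    (d : ℝ) (hd : |d - (a - b)| < ε) :
    ∃ x ∈ A, ∃ y ∈ B, x - y = d := by
  have hMB' : IsMeagre ((fun x : ℝ => x - d) ⁻¹' MB) :=
    hMB.preimage_of_isOpenMap (by continuity)
      (Homeomorph.isOpenMap (Homeomorph.subRight d))
  have hN : IsMeagre (MA ∪ (fun x : ℝ => x - d) ⁻¹' MB) := isMeagre_union hMA hMB'
  have hdense : Dense ((MA ∪ (fun x : ℝ => x - d) ⁻¹' MB)ᶜ) := dense_of_mem_residual hN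
  rw [abs_lt] at hd
  set m : ℝ := (a + b + d) / 2 with hm
  -- the overlap of the two (translated) intervals is a nonempty open set
  set S : Set ℝ := Set.Ioo (a - ε) (a + ε) ∩ Set.Ioo (b - ε + d) (b + ε + d) with hS
  have hSopen : IsOpen S := (isOpen_Ioo).inter isOpen_Ioo
  have hSne : S.Nonempty := by
    refine ⟨m, ⟨?_, ?_⟩, ⟨?_, ?_⟩⟩ <;> (simp only [hm]; linarith [hd.1, hd.2])
  obtain ⟨x, hxS, hxc⟩ := hdense.inter_open_nonempty S hSopen hSne
  rw [Set.mem_compl_iff, Set.mem_union, not_or] at hxc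
  refine ⟨x, hA ⟨hxS.1, hxc.1⟩, x - d, hB ⟨⟨by linarith [hxS.2.1], by linarith [hxS.2.2]⟩, hxc.2⟩, by ring⟩

/-- Picard: the distance set of two nonmeager sets with the Baire property
contains a nonempty open interval. -/
theorem picard_distance_set (A B : Set ℝ)
    (hA : HasBaireProp A) (hB : HasBaireProp B)
    (hA0 : ¬ IsMeagre A) (hB0 : ¬ IsMeagre B) :
    ∃ l u : ℝ, l < u ∧
      Set.Ioo l u ⊆ {d : ℝ | ∃ a ∈ A, ∃ b ∈ B, |a - b| = d} := by
  obtain ⟨a, εa, hεa, MA, hMA, hIA⟩ := exists_interval A hA hA0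
  obtain ⟨b, εb, hεb, MB, hMB, hIB⟩ := exists_interval B hB hB0
  set ε : ℝ := min εa εb with hε
  have hε0 : 0 < ε := lt_min hεa hεb
  have hIA' : Set.Ioo (a - ε) (a + ε) \ MA ⊆ A := by
    refine Set.diff_subset_diff_left ?_ |>.trans hIA
    exact Set.Ioo_subset_Ioo (by simp [hε, min_le_left]; linarith [min_le_left εa εb])
      (by linarith [min_le_left εa εb])
  have hIB' : Set.Ioo (b - ε) (b + ε) \ MB ⊆ B := by
    refine Set.diff_subset_diff_left ?_ |>.trans hIB
    exact Set.Ioo_subset_Ioo (by linarith [min_le_right εa εb])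
      (by linarith [min_le_right εa εb])
  have hkey : ∀ d : ℝ, |d - (a - b)| < ε → ∃ x ∈ A, ∃ y ∈ B, x - y = d :=
    key A B a b ε hε0 MA MB hMA hMB hIA' hIB'
  rcases le_or_gt 0 (a - b) with ht | ht
  · refine ⟨a - b, a - b + ε, by linarith, ?_⟩
    intro s hs
    obtain ⟨x, hx, y, hy, hxy⟩ := hkey s (by rw [abs_lt]; exact ⟨by linarith [hs.1], by linarith [hs.2]⟩)
    exact ⟨x, hx, y, hy, by rw [hxy]; exact abs_of_pos (by linarith [hs.1])⟩
  · refine ⟨-(a - b), -(a - b) + ε, by linarith, ?_⟩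
    intro s hs
    obtain ⟨x, hx, y, hy, hxy⟩ := hkey (-s)
      (by rw [abs_lt]; exact ⟨by linarith [hs.2], by linarith [hs.1]⟩)
    refine ⟨x, hx, y, hy, ?_⟩
    rw [hxy, abs_neg]
    exact abs_of_pos (by linarith [hs.1])
end

section
/- If {A_n} (n = 1, 2, 3, ...) is any infinite sequence of subsets of ℝ, each nonmeager and having the Baire property, then there exists a sequence {a_n} of pairwise distinct points such that a_n ∈ A_n for every n and all the mutual distances |a_m - a_n| (m ≠ n) are rational numbers. -/
section Pick

variable (Q : ℕ → Set ℚ) (hQ : ∀ n, (Q n).Infinite)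

/-- Auxiliary: recursively built list of chosen elements. -/
noncomputable def steinhausChain : ℕ → List ℚ
  | 0 => []
  | n + 1 => steinhausChain n ++
      [((hQ n).diff (steinhausChain n).finite_toSet).nonempty.some]

/-- Auxiliary: the `n`-th chosen element. -/
noncomputable def steinhausPick (n : ℕ) : ℚ :=
  ((hQ n).diff (steinhausChain Q hQ n).finite_toSet).nonempty.some

lemma steinhausPick_spec (n : ℕ) :
    steinhausPick Q hQ n ∈ Q n ∧ steinhausPick Q hQ n ∉ steinhausChain Q hQ n := by
  have h := ((hQ n).diff (steinhausChain Q hQ n).finite_toSet).nonempty.some_mem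
  exact ⟨h.1, h.2⟩

lemma steinhausChain_mono {m n : ℕ} (h : m ≤ n) {x : ℚ}
    (hx : x ∈ steinhausChain Q hQ m) : x ∈ steinhausChain Q hQ n := by
  induction n with
  | zero =>
      rw [Nat.le_zero.mp h] at hx; exact hx
  | succ k ih =>
      rcases Nat.lt_or_ge m (k+1) with h' | h'
      · have := ih (by omega)
        simp [steinhausChain]
        left
        exact this
      · have : m = k + 1 := by omega
        subst this; exact hx

lemma steinhausPick_mem_chain (n : ℕ) :
    steinhausPick Q hQ n ∈ steinhausChain Q hQ (n + 1) := by
  simp [steinhausChain, steinhausPick]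

lemma steinhausPick_injective : Function.Injective (steinhausPick Q hQ) := by
  intro m n hmn
  by_contra hne
  rcases Nat.lt_or_ge m n with h | h
  · have h1 : steinhausPick Q hQ m ∈ steinhausChain Q hQ n :=
      steinhausChain_mono Q hQ (by omega) (steinhausPick_mem_chain Q hQ m)
    rw [hmn] at h1
    exact (steinhausPick_spec Q hQ n).2 h1
  · have h' : n < m := by omega
    have h1 : steinhausPick Q hQ n ∈ steinhausChain Q hQ m :=
      steinhausChain_mono Q hQ (by omega) (steinhausPick_mem_chain Q hQ n)
    rw [← hmn] at h1
    exact (steinhausPick_spec Q hQ m).2 h1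

end Pick

/-- Category analogue of Steinhaus: from a sequence of nonmeager Baire-property sets one can
pick pairwise distinct points, one in each set, with all mutual distances rational. -/
theorem steinhaus_rational_distances_category (A : ℕ → Set ℝ)
    (hBP : ∀ n, HasBaireProp (A n))
    (hnm : ∀ n, ¬ IsMeagre (A n)) :
    ∃ a : ℕ → ℝ, Function.Injective a ∧ (∀ n, a n ∈ A n) ∧
      ∀ m n, m ≠ n → ∃ q : ℚ, |a m - a n| = (q : ℝ) := by
  -- Step 1: each A n is comeager in some interval.
  have step1 : ∀ n, ∃ c d : ℝ, c < d ∧ ∃ M : Set ℝ, IsMeagre M ∧ Set.Ioo c d \ M ⊆ A n := by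
    intro n
    obtain ⟨U, hU, hM⟩ := hBP n
    have hUne : U.Nonempty := by
      rcases Set.eq_empty_or_nonempty U with h | h
      · subst h
        simp [symmDiff] at hM
        exact absurd hM (hnm n)
      · exact h
    obtain ⟨x, hx⟩ := hUne
    obtain ⟨ε, hε, hball⟩ := Metric.isOpen_iff.1 hU x hx
    refine ⟨x - ε, x + ε, by linarith, symmDiff (A n) U, hM, ?_⟩
    intro y hy
    have hyU : y ∈ U := hball (by rw [Real.ball_eq_Ioo]; exact hy.1)
    by_contra hyA
    exact hy.2 (Set.mem_symmDiff.2 (Or.inr ⟨hyU, hyA⟩))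
  choose c d hcd M hMmea hsub using step1
  -- Step 2: the union of all rational translates of the M n is meager.
  set e : ℕ → ℕ × ℚ := fun k => (Denumerable.eqv (ℕ × ℚ)).symm k with he
  set T : Set ℝ := ⋃ k : ℕ, (fun x => x + ((e k).2 : ℝ)) ⁻¹' M (e k).1 with hT
  have hTmea : IsMeagre T := by
    apply isMeagre_iUnion
    intro k
    exact IsMeagre.preimage_of_isOpenMap
      (Homeomorph.addRight ((e k).2 : ℝ)).continuous
      (Homeomorph.addRight ((e k).2 : ℝ)).isOpenMap (hMmea _)
  -- Step 3: pick a point avoiding T.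
  obtain ⟨x, hx⟩ := (dense_of_mem_residual hTmea).nonempty
  have hxT : ∀ n (q : ℚ), x + (q : ℝ) ∉ M n := by
    intro n q hmem
    apply hx
    rw [hT]
    refine Set.mem_iUnion.2 ⟨Denumerable.eqv (ℕ × ℚ) (n, q), ?_⟩
    simp only [he, Equiv.symm_apply_apply]
    exact hmem
  -- Step 4: rationals landing in the interval.
  set Q : ℕ → Set ℚ := fun n => {q : ℚ | x + (q : ℝ) ∈ Set.Ioo (c n) (d n)} with hQdef
  have hQinf : ∀ n, (Q n).Infinite := by
    intro n
    obtain ⟨c', hc'⟩ := exists_rat_btwn (show c n - x < d n - x by linarith [hcd n])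
    obtain ⟨d', hd'⟩ := exists_rat_btwn hc'.2
    have hcd' : c' < d' := by exact_mod_cast hd'.1
    refine (Set.Ioo_infinite hcd').mono ?_
    intro q hq
    have h1 : (c' : ℝ) < q := by exact_mod_cast hq.1
    have h2 : (q : ℝ) < d' := by exact_mod_cast hq.2
    constructor
    · linarith [hc'.1]
    · linarith [hd'.2]
  -- Step 5: such rationals give points of A n.
  have hQA : ∀ n, ∀ q ∈ Q n, x + (q : ℝ) ∈ A n := by
    intro n q hq
    exact hsub n ⟨hq, hxT n q⟩
  -- Step 6: choose distinct rationals.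
  set f : ℕ → ℚ := steinhausPick Q hQinf with hf
  refine ⟨fun n => x + (f n : ℝ), ?_, ?_, ?_⟩
  · intro m n h
    have : (f m : ℝ) = f n := by linarith [add_left_cancel h]
    exact steinhausPick_injective Q hQinf (by exact_mod_cast this)
  · intro n
    exact hQA n (f n) (steinhausPick_spec Q hQinf n).1
  · intro m n _
    refine ⟨|f m - f n|, ?_⟩
    push_cast
    rw [abs_sub_comm, abs_sub_comm ((f m : ℝ))]
    ring_nf
end

section
/- If A is a nonmeager subset of ℝ having the Baire property, then there exist a countable set P ⊆ A whose points have pairwise rational mutual distances and a meager set H ⊆ ℝ such that P ⊆ A ⊆ P′ ∪ H, where P′ denotes the derived set of P (the set of all accumulation points of P). -/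
open Topology


/-- Category analogue of the Steinhaus covering theorem: a nonmeager Baire-property set `A`
contains a countable set `P` with pairwise rational mutual distances such that
`A ⊆ P′ ∪ H` for some meager set `H`, where `P′ = derivedSet P` is the set of
accumulation points of `P`. -/
theorem steinhaus_covering_category (A : Set ℝ)
    (hBP : HasBaireProp A) (hnm : ¬ IsMeagre A) :
    ∃ P H : Set ℝ, P.Countable ∧ P ⊆ A ∧
      (∀ p ∈ P, ∀ q ∈ P, ∃ r : ℚ, |p - q| = (r : ℝ)) ∧
      IsMeagre H ∧ A ⊆ derivedSet P ∪ H := by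
  obtain ⟨U, hUopen, hM⟩ := hBP
  set M : Set ℝ := symmDiff A U with hMdef
  -- the union of rational translates of M is meager
  have htrans : ∀ q : ℚ, IsMeagre ((fun x : ℝ => x + (q : ℝ)) ⁻¹' M) := by
    intro q
    exact hM.preimage_of_isOpenMap (continuous_add_right _)
      (isOpenMap_add_right _)
  have hNmeagre : IsMeagre (⋃ n : ℕ, (fun x : ℝ =>
      x + (((Denumerable.eqv ℚ).symm n : ℚ) : ℝ)) ⁻¹' M) :=
    isMeagre_iUnion fun n => htrans _
  -- pick c avoiding all these translates
  have hdense : Dense ((⋃ n : ℕ, (fun x : ℝ =>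
      x + (((Denumerable.eqv ℚ).symm n : ℚ) : ℝ)) ⁻¹' M)ᶜ) :=
    dense_of_mem_residual hNmeagre
  obtain ⟨c, hc⟩ := hdense.nonempty
  have hcM : ∀ q : ℚ, c + (q : ℝ) ∉ M := by
    intro q hq
    apply hc
    simp only [Set.mem_iUnion, Set.mem_preimage]
    exact ⟨Denumerable.eqv ℚ q, by rwa [(Denumerable.eqv ℚ).symm_apply_apply]⟩
  set P : Set ℝ := (Set.range fun q : ℚ => c + (q : ℝ)) ∩ U with hPdef
  refine ⟨P, A \ U, ?_, ?_, ?_, ?_, ?_⟩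
  · exact (Set.countable_range _).mono Set.inter_subset_left
  · rintro x ⟨⟨q, rfl⟩, hxU⟩
    by_contra hxA
    exact hcM q (by simp [hMdef, symmDiff_def, hxU, hxA])
  · rintro p ⟨⟨q₁, rfl⟩, -⟩ q ⟨⟨q₂, rfl⟩, -⟩
    exact ⟨|q₁ - q₂|, by push_cast; ring_nf⟩
  · exact hM.mono fun x hx => by
      simp [hMdef, symmDiff_def]; exact Or.inl ⟨hx.1, hx.2⟩
  · intro x hxA
    by_cases hxU : x ∈ U
    · left
      rw [mem_derivedSet, accPt_iff_nhds]
      intro V hV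
      have hVU : V ∩ U ∈ 𝓝 x := Filter.inter_mem hV (hUopen.mem_nhds hxU)
      obtain ⟨ε, hε, hball⟩ := Metric.mem_nhds_iff.mp hVU
      obtain ⟨q, hq1, hq2⟩ := exists_rat_btwn (show x - c < x - c + ε by linarith)
      refine ⟨c + (q : ℝ), ⟨?_, ⟨q, rfl⟩, ?_⟩, by intro h; rw [← h] at hq1; linarith⟩
      · have : c + (q : ℝ) ∈ Metric.ball x ε := by
          rw [Metric.mem_ball, Real.dist_eq, abs_lt]; constructor <;> linarith
        exact (hball this).1
      · have : c + (q : ℝ) ∈ Metric.ball x ε := by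
          rw [Metric.mem_ball, Real.dist_eq, abs_lt]; constructor <;> linarith
        exact (hball this).2
    · exact Or.inr ⟨hxA, hxU⟩
end

section
/- There exists a set V ⊆ ℝ which is simultaneously a Vitali set and a Bernstein set; that is, V contains exactly one element from each coset of ℚ in ℝ, and both V and ℝ \ V intersect every nonempty perfect subset of ℝ. -/
open Cardinal Set Function

namespace VB

def rq (x y : ℝ) : Prop := ∃ q : ℚ, x - y = (q : ℝ)

lemma rq_refl (x : ℝ) : rq x x := ⟨0, by simp⟩

lemma rq_symm {x y : ℝ} (h : rq x y) : rq y x := by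
  obtain ⟨q, hq⟩ := h; exact ⟨-q, by push_cast; linarith⟩

lemma rq_trans {x y z : ℝ} (h : rq x y) (h' : rq y z) : rq x z := by
  obtain ⟨q, hq⟩ := h; obtain ⟨q', hq'⟩ := h'
  exact ⟨q + q', by push_cast; linarith⟩

def rqSetoid : Setoid ℝ := ⟨rq, ⟨rq_refl, rq_symm, rq_trans⟩⟩

def PF : Type := {P : Set ℝ // Perfect P ∧ P.Nonempty}

instance : PerfectSpace ℝ :=
  perfectSpace_iff_forall_not_isolated.2 fun _ => inferInstance

instance : Nonempty PF := ⟨⟨Set.univ, PerfectSpace.univ_perfect ℝ, univ_nonempty⟩⟩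

lemma continuum_le_mk_of_perfect {P : Set ℝ} (hP : Perfect P) (hne : P.Nonempty) :
    𝔠 ≤ #P := by
  obtain ⟨f, hfr, -, hfi⟩ := hP.exists_nat_bool_injection hne
  have : #(ℕ → Bool) ≤ #P :=
    mk_le_of_injective (f := fun x => (⟨f x, hfr ⟨x, rfl⟩⟩ : P))
      (fun a b h => hfi (Subtype.mk_eq_mk.1 h))
  rwa [show #(ℕ → Bool) = 𝔠 by simp [mk_arrow, two_power_aleph0]] at this

lemma mk_PF_le : #PF ≤ 𝔠 := by
  have hinj : Function.Injective
      (fun P : PF => {p : ℚ × ℚ | Set.Ioo (p.1 : ℝ) (p.2 : ℝ) ∩ P.1 = ∅}) := by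
    have key : ∀ P Q : PF,
        {p : ℚ × ℚ | Set.Ioo (p.1 : ℝ) (p.2 : ℝ) ∩ P.1 = ∅} =
        {p : ℚ × ℚ | Set.Ioo (p.1 : ℝ) (p.2 : ℝ) ∩ Q.1 = ∅} → P.1 ⊆ Q.1 := by
      intro P Q h x hx
      by_contra hxQ
      obtain ⟨ε, εpos, hball⟩ := Metric.isOpen_iff.1 Q.2.1.closed.isOpen_compl x hxQ
      obtain ⟨a, ha1, ha2⟩ := exists_rat_btwn (show x - ε < x by linarith)
      obtain ⟨b, hb1, hb2⟩ := exists_rat_btwn (show x < x + ε by linarith)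
      have hQ : Set.Ioo (a : ℝ) (b : ℝ) ∩ Q.1 = ∅ := by
        ext y; simp only [Set.mem_inter_iff, Set.mem_Ioo, Set.mem_empty_iff_false,
          iff_false, not_and]
        rintro ⟨hy1, hy2⟩ hyQ
        exact hball (by rw [Real.ball_eq_Ioo]; exact ⟨by linarith, by linarith⟩) hyQ
      have hP : Set.Ioo (a : ℝ) (b : ℝ) ∩ P.1 = ∅ := by
        have : (⟨a, b⟩ : ℚ × ℚ) ∈ {p : ℚ × ℚ | Set.Ioo (p.1 : ℝ) (p.2 : ℝ) ∩ P.1 = ∅} := by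
          rw [h]; exact hQ
        exact this
      exact absurd hP (by
        apply Set.nonempty_iff_ne_empty.1
        exact ⟨x, ⟨ha2, hb1⟩, hx⟩)
    intro P Q h
    exact Subtype.ext (le_antisymm (key P Q h) (key Q P h.symm))
  calc #PF ≤ #(Set (ℚ × ℚ)) := mk_le_of_injective hinj
    _ = 𝔠 := by rw [mk_set]; simp [two_power_aleph0]

end VB

namespace VB

lemma exists_two {P : Set ℝ} (hP : Perfect P) (hne : P.Nonempty)
    (S : Set ℝ) (hS : #S < 𝔠) :
    ∃ p : ℝ × ℝ, p.1 ∈ P ∧ p.2 ∈ P ∧ ¬ rq p.1 p.2 ∧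
      ∀ s ∈ S, ¬ rq p.1 s ∧ ¬ rq p.2 s := by
  have hcP := continuum_le_mk_of_perfect hP hne
  -- union of cosets of S
  set T : Set ℝ := Set.range (fun p : S × ℚ => (p.1 : ℝ) + (p.2 : ℝ)) with hT
  have hTcard : #T < 𝔠 := by
    refine lt_of_le_of_lt (mk_range_le) ?_
    rw [mk_prod]
    simp only [Cardinal.lift_id]
    exact mul_lt_of_lt aleph0_le_continuum hS
      (by rw [mk_eq_aleph0 ℚ]; exact aleph0_lt_continuum)
  have hmem : ∀ x : ℝ, (∃ s ∈ S, rq x s) → x ∈ T := by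
    rintro x ⟨s, hs, q, hq⟩
    exact ⟨⟨⟨s, hs⟩, q⟩, by simp; linarith⟩
  have hPT : (P \ T).Nonempty := by
    by_contra h
    rw [Set.not_nonempty_iff_eq_empty, Set.diff_eq_empty] at h
    exact absurd (hcP.trans (mk_le_mk_of_subset h)) (not_le.2 hTcard)
  obtain ⟨b, hbP, hbT⟩ := hPT
  -- now avoid also the coset of b
  set T' : Set ℝ := T ∪ Set.range (fun q : ℚ => b + (q : ℝ)) with hT'
  have hT'card : #T' < 𝔠 := by
    refine lt_of_le_of_lt (mk_union_le _ _) ?_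
    exact add_lt_of_lt aleph0_le_continuum hTcard
      (lt_of_le_of_lt mk_range_le (by rw [mk_eq_aleph0 ℚ]; exact aleph0_lt_continuum))
  have hPT' : (P \ T').Nonempty := by
    by_contra h
    rw [Set.not_nonempty_iff_eq_empty, Set.diff_eq_empty] at h
    exact absurd (hcP.trans (mk_le_mk_of_subset h)) (not_le.2 hT'card)
  obtain ⟨w, hwP, hwT'⟩ := hPT'
  refine ⟨⟨b, w⟩, hbP, hwP, ?_, ?_⟩
  · intro h
    obtain ⟨q, hq⟩ := rq_symm h
    exact hwT' (Or.inr ⟨q, by simp; linarith⟩)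
  · intro s hs
    constructor
    · exact fun h => hbT (hmem b ⟨s, hs, h⟩)
    · exact fun h => hwT' (Or.inl (hmem w ⟨s, hs, h⟩))

end VB

namespace VB

/-- Index type: a well-order of type `𝔠.ord`. -/
abbrev I : Type := (Cardinal.continuum).ord.ToType

lemma mk_I : #I = 𝔠 := Cardinal.mk_ord_toType _

lemma mk_Iio_I (i : I) : #(Set.Iio i) < 𝔠 := Cardinal.mk_Iio_ord_toType i

/-- an enumeration of all nonempty perfect sets -/
noncomputable def g : I → PF := by
  have h : #PF ≤ #I := by rw [mk_I]; exact mk_PF_le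
  exact Function.invFun (Classical.choice (Cardinal.le_def _ _ |>.1 h) : PF ↪ I)

lemma g_surj : Function.Surjective g :=
  Function.invFun_surjective (Classical.choice _ : PF ↪ I).injective

/-- the set of previously chosen points -/
def prevS (i : I) (IH : ∀ j : I, j < i → ℝ × ℝ) : Set ℝ :=
  Set.range (fun p : {j : I // j < i} × Bool =>
    cond p.2 (IH p.1.1 p.1.2).1 (IH p.1.1 p.1.2).2)

lemma prevS_card (i : I) (IH : ∀ j : I, j < i → ℝ × ℝ) : #(prevS i IH) < 𝔠 := by
  refine lt_of_le_of_lt mk_range_le ?_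
  rw [mk_prod]
  simp only [Cardinal.lift_id]
  exact mul_lt_of_lt aleph0_le_continuum (mk_Iio_I i)
    ((lt_aleph0_of_finite Bool).trans aleph0_lt_continuum)

noncomputable def f : I → ℝ × ℝ :=
  (wellFounded_lt (α := I)).fix fun i IH =>
    (exists_two (g i).2.1 (g i).2.2 (prevS i IH) (prevS_card i IH)).choose

lemma f_spec (i : I) :
    (f i).1 ∈ (g i).1 ∧ (f i).2 ∈ (g i).1 ∧ ¬ rq (f i).1 (f i).2 ∧
      ∀ j : I, j < i →
        (¬ rq (f i).1 (f j).1 ∧ ¬ rq (f i).1 (f j).2) ∧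
        (¬ rq (f i).2 (f j).1 ∧ ¬ rq (f i).2 (f j).2) := by
  have heq : f i = (exists_two (g i).2.1 (g i).2.2
      (prevS i (fun j _ => f j)) (prevS_card i _)).choose :=
    (wellFounded_lt (α := I)).fix_eq _ i
  obtain ⟨h1, h2, h3, h4⟩ := (exists_two (g i).2.1 (g i).2.2
      (prevS i (fun j _ => f j)) (prevS_card i _)).choose_spec
  rw [← heq] at h1 h2 h3 h4
  refine ⟨h1, h2, h3, fun j hj => ?_⟩
  have m1 : (f j).1 ∈ prevS i (fun j _ => f j) := ⟨⟨⟨j, hj⟩, true⟩, rfl⟩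
  have m2 : (f j).2 ∈ prevS i (fun j _ => f j) := ⟨⟨⟨j, hj⟩, false⟩, rfl⟩
  exact ⟨⟨(h4 _ m1).1, (h4 _ m2).1⟩, ⟨(h4 _ m1).2, (h4 _ m2).2⟩⟩

end VB

namespace VB

attribute [local instance] Classical.propDecidable

lemma b_b {i j : I} (h : rq (f i).1 (f j).1) : i = j := by
  rcases lt_trichotomy i j with hlt | heq | hgt
  · exact absurd (rq_symm h) ((f_spec j).2.2.2 i hlt).1.1
  · exact heq
  · exact absurd h ((f_spec i).2.2.2 j hgt).1.1

lemma b_w {i j : I} (h : rq (f i).1 (f j).2) : False := by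
  rcases lt_trichotomy i j with hlt | heq | hgt
  · exact (((f_spec j).2.2.2 i hlt).2.1) (rq_symm h)
  · subst heq; exact (f_spec i).2.2.1 h
  · exact (((f_spec i).2.2.2 j hgt).1.2) h

lemma w_w {i j : I} (h : rq (f i).2 (f j).2) : i = j := by
  rcases lt_trichotomy i j with hlt | heq | hgt
  · exact absurd (rq_symm h) ((f_spec j).2.2.2 i hlt).2.2
  · exact heq
  · exact absurd h ((f_spec i).2.2.2 j hgt).2.2

/-- adjust a representative to avoid the `w` points -/
noncomputable def adjust (y : ℝ) : ℝ :=
  if ∃ i : I, y = (f i).2 then y + 1 else y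

lemma rq_adjust (y : ℝ) : rq (adjust y) y := by
  unfold adjust
  split
  · exact ⟨1, by simp⟩
  · exact rq_refl y

lemma adjust_not_w (y : ℝ) (i : I) : adjust y ≠ (f i).2 := by
  unfold adjust
  split
  · rename_i h
    obtain ⟨j, hj⟩ := h
    intro hc
    have : rq (f i).2 (f j).2 := ⟨1, by rw [← hc, hj]; ring⟩
    have := w_w this
    subst this
    rw [hj] at hc
    linarith [hc]
  · rename_i h
    exact fun hc => h ⟨i, hc⟩

/-- the representative function -/
noncomputable def rep (x : ℝ) : ℝ :=
  if h : ∃ i : I, rq x (f i).1 then (f h.choose).1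
  else adjust (Quotient.out (Quotient.mk rqSetoid x))

lemma rq_out (x : ℝ) : rq (Quotient.out (Quotient.mk rqSetoid x)) x :=
  Quotient.exact (s := rqSetoid) (Quotient.out_eq _)

lemma rq_rep (x : ℝ) : rq x (rep x) := by
  unfold rep
  split
  · rename_i h
    exact h.choose_spec
  · exact rq_symm (rq_trans (rq_adjust _) (rq_out x))

lemma rep_congr {x y : ℝ} (h : rq x y) : rep x = rep y := by
  unfold rep
  have hiff : (∃ i : I, rq x (f i).1) ↔ (∃ i : I, rq y (f i).1) :=
    ⟨fun ⟨i, hi⟩ => ⟨i, rq_trans (rq_symm h) hi⟩,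
     fun ⟨i, hi⟩ => ⟨i, rq_trans h hi⟩⟩
  by_cases hx : ∃ i : I, rq x (f i).1
  · have hy := hiff.1 hx
    rw [dif_pos hx, dif_pos hy]
    have h1 := hx.choose_spec
    have h2 := hy.choose_spec
    have : rq (f hx.choose).1 (f hy.choose).1 :=
      rq_trans (rq_symm h1) (rq_trans h h2)
    rw [b_b this]
  · have hy := (not_iff_not.2 hiff).1 hx
    rw [dif_neg hx, dif_neg hy]
    congr 1
    congr 1
    exact Quotient.sound (s := rqSetoid) h

/-- rep of a `b` point is itself -/
lemma rep_b (i : I) : rep (f i).1 = (f i).1 := by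
  have h : ∃ j : I, rq (f i).1 (f j).1 := ⟨i, rq_refl _⟩
  rw [rep, dif_pos h]
  exact congrArg (fun k => (f k).1) (b_b (rq_symm h.choose_spec))

/-- rep never equals a `w` point -/
lemma rep_ne_w (x : ℝ) (i : I) : rep x ≠ (f i).2 := by
  unfold rep
  split
  · rename_i h
    exact fun hc => b_w (i := h.choose) (j := i) ⟨0, by rw [hc]; ring⟩
  · exact adjust_not_w _ i

end VB

/-- `V` is a Vitali set: it contains exactly one element of each coset of `ℚ` in `ℝ`. -/
def IsVitali (V : Set ℝ) : Prop :=
  ∀ x : ℝ, ∃! v : ℝ, v ∈ V ∧ ∃ q : ℚ, x - v = (q : ℝ)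

/-- `B` is a Bernstein set: both `B` and its complement meet every nonempty perfect set. -/
def IsBernstein (B : Set ℝ) : Prop :=
  ∀ P : Set ℝ, Perfect P → P.Nonempty → (B ∩ P).Nonempty ∧ (Bᶜ ∩ P).Nonempty

/-- There is a set which is simultaneously a Vitali set and a Bernstein set. -/
theorem exists_vitali_bernstein :
    ∃ V : Set ℝ, IsVitali V ∧ IsBernstein V := by
  refine ⟨Set.range VB.rep, ?_, ?_⟩
  · intro x
    refine ⟨VB.rep x, ⟨⟨x, rfl⟩, VB.rq_rep x⟩, ?_⟩
    rintro v ⟨⟨z, rfl⟩, hv⟩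
    exact VB.rep_congr (VB.rq_trans (VB.rq_rep z) (VB.rq_symm hv))
  · intro P hP hne
    obtain ⟨i, hi⟩ := VB.g_surj ⟨P, hP, hne⟩
    have hiP : (VB.g i).1 = P := by rw [hi]
    constructor
    · refine ⟨(VB.f i).1, ⟨(VB.f i).1, VB.rep_b i⟩, ?_⟩
      rw [← hiP]; exact (VB.f_spec i).1
    · refine ⟨(VB.f i).2, ?_, ?_⟩
      · rintro ⟨z, hz⟩
        exact VB.rep_ne_w z i hz
      · rw [← hiP]; exact (VB.f_spec i).2.1
end

section
/- If V ⊆ ℝ is a Vitali set and r₀ ∈ ℝ, then every subset E of the translate V + r₀ that has the Baire property is meager. In particular, no nonmeager subset of V + r₀ has the Baire property. -/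
/-- Every Baire-property subset of a translate of a Vitali set is meager. -/
theorem baire_subset_of_vitali_translate_meager (V : Set ℝ) (hV : IsVitali V)
    (r₀ : ℝ) (E : Set ℝ) (hE : E ⊆ (fun v => v + r₀) '' V)
    (hBP : HasBaireProp E) : IsMeagre E := by
  obtain ⟨U, hUopen, hmeag⟩ := hBP
  -- E \ U and U \ E are both meager
  have hEU : IsMeagre (E \ U) := hmeag.mono (fun x hx => Or.inl hx)
  have hUE : IsMeagre (U \ E) := hmeag.mono (fun x hx => Or.inr hx)
  rcases U.eq_empty_or_nonempty with hU | ⟨x, hx⟩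
  · -- then E = E \ U is meager
    have : E = E \ U := by rw [hU]; simp
    rw [this]; exact hEU
  -- U nonempty open: derive a contradiction
  exfalso
  obtain ⟨ε, hε, hball⟩ := Metric.isOpen_iff.mp hUopen x hx
  obtain ⟨q, hq0, hqε⟩ := exists_rat_btwn hε
  -- E and E + q are disjoint
  have hdisj : ∀ y, y ∈ E → y - (q : ℝ) ∈ E → False := by
    intro y hy hy'
    obtain ⟨v₁, hv₁, rfl⟩ := hE hy
    obtain ⟨v₂, hv₂, hv₂eq⟩ := hE hy'
    obtain ⟨v, -, huniq⟩ := hV (v₁ + r₀ - r₀)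
    have e1 : v₁ = v := huniq v₁ ⟨hv₁, ⟨0, by push_cast; ring⟩⟩
    have e2 : v₂ = v := by
      refine huniq v₂ ⟨hv₂, ⟨q, ?_⟩⟩
      have : v₂ + r₀ = v₁ + r₀ - (q : ℝ) := hv₂eq
      linarith [this]
    have : v₂ + r₀ = v₁ + r₀ - (q : ℝ) := hv₂eq
    rw [e1, ← e2] at this
    have : (q : ℝ) = 0 := by linarith
    exact absurd (by exact_mod_cast this) (ne_of_gt hq0)
  -- translate of U \ E by q is meager
  have htrans : IsMeagre ((fun y : ℝ => y - (q : ℝ)) ⁻¹' (U \ E)) := by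
    refine IsMeagre.preimage_of_isOpenMap ?_ ?_ hUE
    · exact continuous_sub_right _
    · exact (Homeomorph.subRight (q : ℝ)).isOpenMap
  -- the open set U ∩ (preimage of U) is nonempty
  have hxq : x + (q : ℝ) ∈ U ∩ ((fun y : ℝ => y - (q : ℝ)) ⁻¹' U) := by
    constructor
    · apply hball
      simp only [Metric.mem_ball, Real.dist_eq]
      have h1 : x + (q : ℝ) - x = (q : ℝ) := by ring
      rw [h1, abs_of_pos hq0]
      exact hqε
    · simp only [Set.mem_preimage]
      simpa using hx
  have hopen : IsOpen (U ∩ ((fun y : ℝ => y - (q : ℝ)) ⁻¹' U)) :=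
    hUopen.inter (hUopen.preimage (continuous_sub_right _))
  -- this nonempty open set is covered by two meager sets
  have hcover : U ∩ ((fun y : ℝ => y - (q : ℝ)) ⁻¹' U) ⊆
      (U \ E) ∪ ((fun y : ℝ => y - (q : ℝ)) ⁻¹' (U \ E)) := by
    rintro y ⟨hyU, hyU'⟩
    by_cases hyE : y ∈ E
    · right
      refine ⟨hyU', fun hyE' => ?_⟩
      exact hdisj y hyE hyE'
    · exact Or.inl ⟨hyU, hyE⟩
  -- union of two meager sets is meager
  have hmeagU : IsMeagre ((U \ E) ∪ ((fun y : ℝ => y - (q : ℝ)) ⁻¹' (U \ E))) := by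
    rw [IsMeagre, Set.compl_union]
    exact Filter.inter_mem hUE htrans
  have : IsMeagre (U ∩ ((fun y : ℝ => y - (q : ℝ)) ⁻¹' U)) := hmeagU.mono hcover
  -- but a nonempty open set in ℝ is not meager
  have hdense : Dense (U ∩ ((fun y : ℝ => y - (q : ℝ)) ⁻¹' U))ᶜ :=
    dense_of_mem_residual this
  obtain ⟨z, hz1, hz2⟩ := hdense.inter_open_nonempty _ hopen ⟨_, hxq⟩
  exact hz2 hz1
end

section
/- Let V ⊆ ℝ be a set that is simultaneously a Vitali set and a Bernstein set, let B ⊆ ℝ be nonmeager with the Baire property, and let r₀ ∈ ℚ be such that F = (V + r₀) ∩ B is nonmeager. Then F is a full subset of B: every set with the Baire property that is contained in B \ F is meager. -/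
/-! A set with the Baire property that is not meagre contains `U ∩ G` with `U` open nonempty and
`G` a dense Gδ. This Borel set is still not meagre, hence uncountable, hence contains a nonempty
perfect set. A translate of a Bernstein set is again Bernstein, so `V + r₀` meets that perfect set;
therefore a Baire-property set disjoint from `V + r₀` must be meagre. -/

open Set Filter Topology

theorem not_countable_cantorSpace : ¬ Countable (ℕ → Bool) := by
  intro h
  obtain ⟨g, hg⟩ := exists_surjective_nat (ℕ → Bool)
  obtain ⟨n, hn⟩ := hg fun n => !g n n
  simpa using congrFun hn n

theorem MeasurableSet.exists_nat_bool_injection_of_not_countable {α : Type*}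
    [TopologicalSpace α] [PolishSpace α] [MeasurableSpace α] [BorelSpace α] {s : Set α}
    (hs : MeasurableSet s) (hsc : ¬ s.Countable) :
    ∃ f : (ℕ → Bool) → α, range f ⊆ s ∧ Continuous f ∧ Function.Injective f := by
  -- A finer Polish topology in which `s` is closed; continuity for it implies continuity for ours.
  obtain ⟨t', ht', ht'Polish, hst', -⟩ := hs.isClopenable
  obtain ⟨f, hfs, hf't, hf⟩ :=
    @IsClosed.exists_nat_bool_injection_of_not_countable α t' ht'Polish s hst' hsc
  exact ⟨f, hfs, continuous_le_rng ht' hf't, hf⟩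

theorem MeasurableSet.exists_perfect_subset_of_not_countable {α : Type*} [TopologicalSpace α]
    [PolishSpace α] [MeasurableSpace α] [BorelSpace α] {s : Set α} (hs : MeasurableSet s)
    (hsc : ¬ s.Countable) : ∃ P ⊆ s, Perfect P ∧ P.Nonempty := by
  obtain ⟨f, hfs, hfc, hf⟩ := hs.exists_nat_bool_injection_of_not_countable hsc
  have hrange : ¬ (range f).Countable := fun h =>
    not_countable_cantorSpace ((Equiv.ofInjective f hf).countable_iff.mpr h.to_subtype)
  obtain ⟨P, hP, hPne, hPf⟩ :=
    exists_perfect_nonempty_of_isClosed_of_not_countable (isCompact_range hfc).isClosed hrange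
  exact ⟨P, hPf.trans hfs, hP, hPne⟩

theorem Set.Countable.isMeagre {X : Type*} [TopologicalSpace X] [T1Space X] [PerfectSpace X]
    {s : Set X} (hs : s.Countable) : IsMeagre s := by
  rw [← biUnion_of_singleton s]
  refine isMeagre_biUnion hs fun x _ => IsNowhereDense.isMeagre ?_
  rw [IsNowhereDense, closure_singleton, interior_singleton]

theorem HasBaireProp.exists_perfect_subset {S : Set ℝ} (hS : HasBaireProp S)
    (hSm : ¬ IsMeagre S) : ∃ P ⊆ S, Perfect P ∧ P.Nonempty := by
  obtain ⟨U, hU, hSU⟩ := hS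
  obtain ⟨G, hGS, hG, hGd⟩ := mem_residual.mp hSU
  have hUne : U.Nonempty := by
    refine nonempty_iff_ne_empty.mpr fun hU0 => hSm ?_
    simpa [hU0, symmDiff_def] using hSU
  have hUG : U ∩ G ⊆ S := fun x ⟨hxU, hxG⟩ => by
    by_contra hxS
    exact hGS hxG (Or.inr ⟨hxU, hxS⟩)
  have hGm : IsMeagre Gᶜ := by
    rw [IsMeagre, compl_compl]
    exact residual_of_dense_Gδ hG hGd
  have hU_sub : U ⊆ (U ∩ G) ∪ Gᶜ := fun x hx => (em (x ∈ G)).imp (fun hxG => ⟨hx, hxG⟩) id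
  have hUGm : ¬ IsMeagre (U ∩ G) := fun h =>
    not_isMeagre_of_isOpen hU hUne ((h.union hGm).mono hU_sub)
  obtain ⟨P, hPUG, hP⟩ := (hU.isGδ.inter hG).measurableSet.exists_perfect_subset_of_not_countable
    fun h => hUGm h.isMeagre
  exact ⟨P, hPUG.trans hUG, hP⟩

theorem Perfect.preimage_homeomorph {X Y : Type*} [TopologicalSpace X] [TopologicalSpace Y]
    (e : X ≃ₜ Y) {P : Set Y} (hP : Perfect P) : Perfect (e ⁻¹' P) := by
  refine ⟨hP.closed.preimage e.continuous, preperfect_iff_nhds.mpr fun x hx U hU => ?_⟩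
  have hU' : e.symm ⁻¹' U ∈ 𝓝 (e x) :=
    e.symm.continuous.continuousAt.preimage_mem_nhds (by simpa using hU)
  obtain ⟨y, ⟨hyU, hyP⟩, hyx⟩ := preperfect_iff_nhds.mp hP.acc (e x) hx _ hU'
  exact ⟨e.symm y, ⟨hyU, by simpa using hyP⟩, fun h => hyx (by rw [← h]; simp)⟩

theorem IsBernstein.preimage_homeomorph {V : Set ℝ} (hV : IsBernstein V) (e : ℝ ≃ₜ ℝ) :
    IsBernstein (e ⁻¹' V) := by
  intro P hP hPne
  have hQne : (e.symm ⁻¹' P).Nonempty := by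
    rw [e.preimage_symm]
    exact hPne.image e
  obtain ⟨⟨x, hxV, hxQ⟩, ⟨y, hyV, hyQ⟩⟩ := hV _ (hP.preimage_homeomorph e.symm) hQne
  exact ⟨⟨e.symm x, by simpa using hxV, hxQ⟩, ⟨e.symm y, by simpa using hyV, hyQ⟩⟩

theorem IsBernstein.isMeagre_of_disjoint {V S : Set ℝ} (hV : IsBernstein V) (hS : HasBaireProp S)
    (hSV : Disjoint S V) : IsMeagre S := by
  by_contra hSm
  obtain ⟨P, hPS, hP, hPne⟩ := hS.exists_perfect_subset hSm
  obtain ⟨x, hxV, hxP⟩ := (hV P hP hPne).1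
  exact hSV.notMem_of_mem_left (hPS hxP) hxV

theorem vitali_bernstein_translate_full_general (V B : Set ℝ)
    (hVB : IsBernstein V) (r₀ : ℚ) :
    ∀ S : Set ℝ, S ⊆ B \ (((fun v => v + (r₀ : ℝ)) '' V) ∩ B) →
      HasBaireProp S → IsMeagre S := by
  intro S hSsub hSBP
  have hW : IsBernstein ((fun v => v + (r₀ : ℝ)) '' V) := by
    rw [image_add_right]
    exact hVB.preimage_homeomorph (Homeomorph.addRight _)
  refine hW.isMeagre_of_disjoint hSBP (disjoint_left.mpr fun x hxS hxW => ?_)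
  exact (hSsub hxS).2 ⟨hxW, (hSsub hxS).1⟩

/-- If `V` is Vitali-and-Bernstein, `B` is nonmeager with the Baire property, and
`F = (V + r₀) ∩ B` is nonmeager, then `F` is a full subset of `B`: every
Baire-property set contained in `B \ F` is meager. -/
theorem vitali_bernstein_translate_full (V B : Set ℝ)
    (hV : IsVitali V) (hVB : IsBernstein V)
    (hBP : HasBaireProp B) (hnm : ¬ IsMeagre B) (r₀ : ℚ)
    (hF : ¬ IsMeagre (((fun v => v + (r₀ : ℝ)) '' V) ∩ B)) :
    ∀ S : Set ℝ, S ⊆ B \ (((fun v => v + (r₀ : ℝ)) '' V) ∩ B) →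
      HasBaireProp S → IsMeagre S :=
  vitali_bernstein_translate_full_general V B hVB r₀
end

section
/- For every Lebesgue measurable set B ⊆ ℝ of positive Lebesgue measure, there exists a set F ⊆ B such that (i) F has positive Lebesgue outer measure, (ii) every Lebesgue measurable set contained in B \ F has Lebesgue measure zero, and (iii) no two distinct points of F are at a rational distance from one another. -/
/-!
Enumerate the closed subsets of `B` of positive measure in order type `𝔠` (there are at most
`𝔠` closed subsets of `ℝ`), and pick recursively a point in each of them outside the rational
translates of the points picked before. This is possible because a closed set of positive
measure is uncountable, hence has cardinality `𝔠` by the perfect set theorem, while fewer than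
`𝔠` points have been excluded. The set `F` of picked points meets every closed, hence by inner
regularity every measurable, subset of `B` of positive measure.
-/

open Set Cardinal MeasureTheory TopologicalSpace

universe u

section Transversal

variable {ι α : Type u} {κ : Cardinal.{u}} {r : α → α → Prop}

theorem exists_mem_forall_not_rel {s t : Set α} (hκ : ℵ₀ < κ) (hs : κ ≤ #s) (ht : #t < κ)
    (hr : ∀ x, {y | r x y}.Countable) : ∃ y ∈ s, ∀ x ∈ t, ¬ r x y := by
  have hbad : #(⋃ x ∈ t, {y | r x y}) < κ := calc
    _ ≤ #t * ⨆ x : t, #{y | r x y} := mk_biUnion_le _ _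
    _ ≤ #t * ℵ₀ := by gcongr; exact ciSup_le' fun x ↦ le_aleph0_iff_set_countable.2 (hr x)
    _ < κ := mul_lt_of_lt hκ.le ht hκ
  obtain ⟨y, hys, hy⟩ := not_subset.1 fun h ↦ (hs.trans (mk_le_mk_of_subset h)).not_gt hbad
  simp only [mem_iUnion, mem_ofPred_eq, not_exists] at hy
  exact ⟨y, hys, hy⟩

theorem exists_forall_lt_not_rel [LinearOrder ι] [WellFoundedLT ι] (hκ : ℵ₀ < κ)
    (hι : ∀ i : ι, #(Iio i) < κ) (K : ι → Set α) (hK : ∀ i, κ ≤ #(K i))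
    (hr : ∀ x, {y | r x y}.Countable) :
    ∃ f : ι → α, ∀ i, f i ∈ K i ∧ ∀ j < i, ¬ r (f j) (f i) := by
  choose pick hpick_mem hpick using fun (i : ι) (g : Iio i → α) ↦
    exists_mem_forall_not_rel hκ (hK i) (mk_range_le.trans_lt (hι i)) hr (t := range g)
  let f : ι → α := wellFounded_lt.fix fun i g ↦ pick i fun j ↦ g j j.2
  have hf (i : ι) : f i = pick i fun j ↦ f j := wellFounded_lt.fix_eq _ i
  exact ⟨f, fun i ↦ ⟨hf i ▸ hpick_mem _ _, fun j hj ↦ hf i ▸ hpick _ _ _ ⟨⟨j, hj⟩, rfl⟩⟩⟩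

theorem exists_pairwise_not_rel (hκ : ℵ₀ < κ) (hι : #ι ≤ κ) (K : ι → Set α)
    (hK : ∀ i, κ ≤ #(K i)) (hr_symm : ∀ x y, r x y → r y x) (hr : ∀ x, {y | r x y}.Countable) :
    ∃ f : ι → α, (∀ i, f i ∈ K i) ∧ Pairwise fun i j ↦ ¬ r (f i) (f j) := by
  obtain ⟨_, _, hord⟩ := exists_ord_eq_type_lt ι
  obtain ⟨f, hf⟩ := exists_forall_lt_not_rel hκ (fun i ↦ (mk_Iio_lt i hord).trans_le hι) K hK hr
  refine ⟨f, fun i ↦ (hf i).1, fun i j hij hr_ij ↦ ?_⟩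
  rcases hij.lt_or_gt with h | h
  · exact (hf j).2 i h hr_ij
  · exact (hf i).2 j h (hr_symm _ _ hr_ij)

end Transversal

theorem Cardinal.mk_isClosed_le_continuum (X : Type*) [TopologicalSpace X]
    [SecondCountableTopology X] : #{C : Set X // IsClosed C} ≤ 𝔠 := by
  have hb := isBasis_countableBasis X
  let code (C : {C : Set X // IsClosed C}) : Set (countableBasis X) :=
    {s | (s : Set X) ⊆ (C : Set X)ᶜ}
  have hcode : Function.Injective code := by
    rintro ⟨C, hC⟩ ⟨D, hD⟩ h
    have : Cᶜ = Dᶜ := by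
      rw [hb.open_eq_sUnion' hC.isOpen_compl, hb.open_eq_sUnion' hD.isOpen_compl]
      congr 1; ext s; exact and_congr_right fun hs ↦ Set.ext_iff.1 h ⟨s, hs⟩
    exact Subtype.ext (compl_injective this)
  calc #{C : Set X // IsClosed C} ≤ #(Set (countableBasis X)) := mk_le_of_injective hcode
    _ ≤ 2 ^ ℵ₀ := by
      rw [mk_set]; exact power_le_power_left two_ne_zero
        (le_aleph0_iff_set_countable.2 (countable_countableBasis X))
    _ = 𝔠 := two_power_aleph0

theorem Cardinal.continuum_le_mk_of_isClosed_of_not_countable {α : Type*} [TopologicalSpace α]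
    [PolishSpace α] {C : Set α} (hC : IsClosed C) (hunc : ¬ C.Countable) : 𝔠 ≤ #C := by
  obtain ⟨f, hfC, -, hf⟩ := hC.exists_nat_bool_injection_of_not_countable hunc
  have := lift_mk_le_lift_mk_of_injective (f := fun x ↦ (⟨f x, hfC ⟨x, rfl⟩⟩ : C))
    fun a b h ↦ hf (congrArg Subtype.val h)
  simpa using this

theorem countable_setOf_abs_sub_eq_ratCast (x : ℝ) :
    {y : ℝ | ∃ q : ℚ, |x - y| = q}.Countable := by
  refine ((countable_range fun q : ℚ ↦ x - q).union (countable_range fun q : ℚ ↦ x + q)).mono ?_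
  rintro y ⟨q, hq⟩
  rcases abs_cases (x - y) with ⟨h, -⟩ | ⟨h, -⟩
  · exact .inl ⟨q, by linarith⟩
  · exact .inr ⟨q, by linarith⟩

namespace MeasureTheory

variable {X : Type*} [MeasurableSpace X] {μ : Measure X} {B F S : Set X}

theorem measure_eq_zero_of_subset_diff_of_forall_isCompact_inter_nonempty [TopologicalSpace X]
    [μ.InnerRegular] (hF : ∀ K ⊆ B, IsCompact K → 0 < μ K → (K ∩ F).Nonempty)
    (hSB : S ⊆ B \ F) (hS : MeasurableSet S) : μ S = 0 := by
  by_contra hS0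
  obtain ⟨K, hKS, hK, hK0⟩ := hS.exists_lt_isCompact (pos_iff_ne_zero.2 hS0)
  obtain ⟨x, hxK, hxF⟩ := hF K (hKS.trans (hSB.trans sdiff_subset)) hK hK0
  exact (hSB (hKS hxK)).2 hxF

theorem measure_le_of_forall_measurableSet_subset_diff (hB : MeasurableSet B)
    (h : ∀ S ⊆ B \ F, MeasurableSet S → μ S = 0) : μ B ≤ μ F := by
  have hN := measurableSet_toMeasurable μ F
  calc μ B = μ (B ∩ toMeasurable μ F) + μ (B \ toMeasurable μ F) :=
        (measure_inter_add_sdiff B hN).symm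
    _ = μ (B ∩ toMeasurable μ F) := by
        rw [h _ (sdiff_subset_sdiff_right (subset_toMeasurable μ F)) (hB.diff hN), add_zero]
    _ ≤ μ (toMeasurable μ F) := measure_mono inter_subset_right
    _ = μ F := measure_toMeasurable F

end MeasureTheory

/-- Every measurable set `B` of positive Lebesgue measure has a subset `F` of positive
outer measure such that every measurable subset of `B \ F` is null and no two distinct
points of `F` are at rational distance. -/
theorem exists_full_subset_no_rational_distances_measure (B : Set ℝ)
    (hB : MeasurableSet B) (hB0 : 0 < MeasureTheory.volume B) :
    ∃ F : Set ℝ, F ⊆ B ∧ 0 < MeasureTheory.volume F ∧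
      (∀ S : Set ℝ, S ⊆ B \ F → MeasurableSet S → MeasureTheory.volume S = 0) ∧
      (∀ x ∈ F, ∀ y ∈ F, x ≠ y → ¬ ∃ q : ℚ, |x - y| = (q : ℝ)) := by
  let ι := {K : Set ℝ // IsClosed K ∧ K ⊆ B ∧ 0 < volume K}
  have hι : #ι ≤ 𝔠 := (mk_subtype_mono fun _ hK ↦ hK.1).trans (mk_isClosed_le_continuum ℝ)
  have hK (K : ι) : 𝔠 ≤ #K.1 :=
    continuum_le_mk_of_isClosed_of_not_countable K.2.1 fun hc ↦ K.2.2.2.ne' (hc.measure_zero _)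
  obtain ⟨f, hfK, hf⟩ := exists_pairwise_not_rel aleph0_lt_continuum hι (fun K ↦ K.1) hK
    (fun x y ⟨q, hq⟩ ↦ ⟨q, by rwa [abs_sub_comm]⟩) countable_setOf_abs_sub_eq_ratCast
  have hnull (S : Set ℝ) (hSB : S ⊆ B \ range f) (hS : MeasurableSet S) : volume S = 0 :=
    measure_eq_zero_of_subset_diff_of_forall_isCompact_inter_nonempty
      (fun K hKB hK hK0 ↦ ⟨_, hfK ⟨K, hK.isClosed, hKB, hK0⟩, mem_range_self _⟩) hSB hS
  refine ⟨range f, range_subset_iff.2 fun K ↦ K.2.2.1 (hfK K),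
    hB0.trans_le (measure_le_of_forall_measurableSet_subset_diff hB hnull), hnull, ?_⟩
  rintro _ ⟨K, rfl⟩ _ ⟨L, rfl⟩ hne
  exact hf fun h ↦ hne (h ▸ rfl)
end
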